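/- Suppose the nonnegative 3×3 channel strength matrix α satisfies conditions (C1) and (C2), that α_{12} = max_{l≠m} α_{lm}, and that max(α_{23}, α_{32}) ≤ α_{31}. Then D = D̂_{123}. -/
import Mathlib


/-- `δ_i = max_m α_{im}`. -/
noncomputable def deltaI (α : Fin 3 → Fin 3 → ℝ) (i : Fin 3) : ℝ :=
  ⨆ m : Fin 3, α i m

/-- `δ_{i,j} = max_m (α_{im} − α_{jm})⁺`. -/
noncomputable def deltaIJ (α : Fin 3 → Fin 3 → ℝ) (i j : Fin 3) : ℝ :=
  ⨆ m : Fin 3, max (α i m - α j m) 0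

/-- `δ`: the minimum over all orderings `(i,j,k)` of `{1,2,3}` of
`min(δ_i + δ_{j,i} + δ_{k,j}, (δ_i + δ_k + δ_{i,j} + δ_{j,i} + δ_{j,k} + δ_{k,i})/2)`. -/
noncomputable def deltaTot (α : Fin 3 → Fin 3 → ℝ) : ℝ :=
  ⨅ p : Equiv.Perm (Fin 3),
    min (deltaI α (p 0) + deltaIJ α (p 1) (p 0) + deltaIJ α (p 2) (p 1))
      ((deltaI α (p 0) + deltaI α (p 2) + deltaIJ α (p 0) (p 1) +
        deltaIJ α (p 1) (p 0) + deltaIJ α (p 1) (p 2) + deltaIJ α (p 2) (p 0)) / 2)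

/-- The GDoF region `D`. -/
noncomputable def Dregion (α : Fin 3 → Fin 3 → ℝ) : Set (Fin 3 → ℝ) :=
  { d | (∀ i : Fin 3, 0 ≤ d i ∧ d i ≤ deltaI α i) ∧
        (∀ i k : Fin 3, i ≠ k →
          d i + d k ≤ min (deltaI α i + deltaIJ α k i) (deltaI α k + deltaIJ α i k)) ∧
        d 0 + d 1 + d 2 ≤ deltaTot α }

/-- Condition (C1): `max(α_{im}, α_{ki}) ≤ α_{ii}`. -/
def CondC1 (α : Fin 3 → Fin 3 → ℝ) : Prop :=
  ∀ i k m : Fin 3, max (α i m) (α k i) ≤ α i i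

/-- Condition (C2): `α_{ki} + α_{im} ≤ α_{ii} + α_{km}`. -/
def CondC2 (α : Fin 3 → Fin 3 → ℝ) : Prop :=
  ∀ i k m : Fin 3, α k i + α i m ≤ α i i + α k m

/-- `max_{l≠m} α_{lm}`: the largest cross-channel strength. -/
noncomputable def maxCross (α : Fin 3 → Fin 3 → ℝ) : ℝ :=
  max (α 0 1) (max (α 0 2) (max (α 1 0) (max (α 1 2) (max (α 2 0) (α 2 1)))))

/-- The region `D̂_{ijk}` for an ordering `(i,j,k)` of the three users
(defined to be empty unless `max_{l≠m} α_{lm} ≤ min(α_{ii}, α_{jj})`). -/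
noncomputable def Dhat (α : Fin 3 → Fin 3 → ℝ) (i j k : Fin 3) : Set (Fin 3 → ℝ) :=
  if maxCross α ≤ min (α i i) (α j j) then
    { d | 0 ≤ d 0 ∧ 0 ≤ d 1 ∧ 0 ≤ d 2 ∧
          d 0 ≤ α 0 0 ∧ d 1 ≤ α 1 1 ∧ d 2 ≤ α 2 2 ∧
          d i + d j ≤ α i i + α j j - maxCross α ∧
          d i + d k ≤ α i i + α k k - max (α j k) (max (α k j) (max (α k i) (α i k))) ∧
          d j + d k ≤ α j j + α k k - max (α j k) (α k j) ∧
          d 0 + d 1 + d 2 ≤ α 0 0 + α 1 1 + α 2 2 -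
            max (maxCross α + max (α j k) (α k j))
              (max (α i k + α k i) (max (α k i + α i j) (α j i + α i k))) }
  else ∅

/-- The region `F̂_{ijk}` for an ordering `(i,j,k)` of the three users
(defined to be empty unless `max_{l≠m} α_{lm} ≤ min(α_{ii}, α_{jj})`). -/
noncomputable def Fhat (α : Fin 3 → Fin 3 → ℝ) (i j k : Fin 3) : Set (Fin 3 → ℝ) :=
  if maxCross α ≤ min (α i i) (α j j) then
    { d | 0 ≤ d 0 ∧ 0 ≤ d 1 ∧ 0 ≤ d 2 ∧
          d 0 ≤ α 0 0 ∧ d 1 ≤ α 1 1 ∧ d 2 ≤ α 2 2 ∧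
          d i + d j ≤ α i i + α j j - maxCross α ∧
          d i + d k ≤ α i i + α k k - max (α j k) (max (α k i) (α i k)) ∧
          d j + d k ≤ α j j + α k k - max (α j k) (max (α k i) (α k j)) ∧
          d 0 + d 1 + d 2 ≤ α 0 0 + α 1 1 + α 2 2 -
            max (maxCross α + max (α k i) (α j k))
              (max (α i k + α j i) (max (α k j + α j i)
                (max (α k j + α i k) ((α i j + α i k + α k j + α j i) / 2)))) }
  else ∅

/-- Under (C1), `δ_i = α_{ii}`. -/
lemma deltaI_eq (α : Fin 3 → Fin 3 → ℝ) (h1 : CondC1 α) (i : Fin 3) :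
    deltaI α i = α i i := by
  unfold deltaI
  apply le_antisymm
  · exact ciSup_le fun m => le_trans (le_max_left _ _) (h1 i i m)
  · exact le_ciSup (Set.Finite.bddAbove (Set.finite_range _)) i

/-- Under (C1),(C2), `δ_{k,i} = α_{kk} − α_{ik}`. -/
lemma deltaIJ_eq (α : Fin 3 → Fin 3 → ℝ) (h1 : CondC1 α) (h2 : CondC2 α) (k i : Fin 3) :
    deltaIJ α k i = α k k - α i k := by
  unfold deltaIJ
  apply le_antisymm
  · apply ciSup_le; intro m
    apply max_le
    · have := h2 k i m
      linarith
    · have := le_trans (le_max_right _ _) (h1 k i i)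
      linarith
  · have h := le_ciSup (Set.Finite.bddAbove
      (Set.finite_range (fun m => max (α k m - α i m) 0))) k
    have h0 : (0:ℝ) ≤ α k k - α i k := by
      have := le_trans (le_max_right _ _) (h1 k i i); linarith
    simpa [max_eq_left h0] using h

/-- The permutation `(0,1,2) ↦ (2,0,1)`. -/
def p201 : Equiv.Perm (Fin 3) := ⟨![2,0,1], ![1,2,0], by decide, by decide⟩
/-- The permutation `(0,1,2) ↦ (1,0,2)`. -/
def p102 : Equiv.Perm (Fin 3) := ⟨![1,0,2], ![1,0,2], by decide, by decide⟩

lemma perm_cases (p : Equiv.Perm (Fin 3)) :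
    (p 0 = 0 ∧ p 1 = 1 ∧ p 2 = 2) ∨ (p 0 = 0 ∧ p 1 = 2 ∧ p 2 = 1) ∨
    (p 0 = 1 ∧ p 1 = 0 ∧ p 2 = 2) ∨ (p 0 = 1 ∧ p 1 = 2 ∧ p 2 = 0) ∨
    (p 0 = 2 ∧ p 1 = 0 ∧ p 2 = 1) ∨ (p 0 = 2 ∧ p 1 = 1 ∧ p 2 = 0) := by
  revert p; decide

/-- If `α₁₂` is the largest cross link and `max(α₂₃, α₃₂) ≤ α₃₁`, then under
(C1),(C2) the GDoF region `D` equals `D̂₁₂₃`. -/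
theorem Dregion_eq_Dhat123 (α : Fin 3 → Fin 3 → ℝ)
    (hα : ∀ i m : Fin 3, 0 ≤ α i m) (h1 : CondC1 α) (h2 : CondC2 α)
    (hmax : α 0 1 = maxCross α) (hcase : max (α 1 2) (α 2 1) ≤ α 2 0) :
    Dregion α = Dhat α 0 1 2 := by
  have hd := deltaI_eq α h1
  have hdd := deltaIJ_eq α h1 h2
  -- α 0 1 dominates all cross links
  have h02 : α 0 2 ≤ α 0 1 := by rw [hmax]; unfold maxCross; simp [le_max_iff]
  have h10 : α 1 0 ≤ α 0 1 := by rw [hmax]; unfold maxCross; simp [le_max_iff]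
  have h12 : α 1 2 ≤ α 0 1 := by rw [hmax]; unfold maxCross; simp [le_max_iff]
  have h20 : α 2 0 ≤ α 0 1 := by rw [hmax]; unfold maxCross; simp [le_max_iff]
  have h21 : α 2 1 ≤ α 0 1 := by rw [hmax]; unfold maxCross; simp [le_max_iff]
  have hc12 : α 1 2 ≤ α 2 0 := le_trans (le_max_left _ _) hcase
  have hc21 : α 2 1 ≤ α 2 0 := le_trans (le_max_right _ _) hcase
  have hcond : maxCross α ≤ min (α 0 0) (α 1 1) := by
    rw [← hmax]
    exact le_min (le_trans (le_max_left _ _) (h1 0 0 1))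
      (le_trans (le_max_right _ _) (h1 1 0 1))
  -- upper bounds on δ from specific permutations
  have hT : ∀ p : Equiv.Perm (Fin 3), deltaTot α ≤
      min (deltaI α (p 0) + deltaIJ α (p 1) (p 0) + deltaIJ α (p 2) (p 1))
        ((deltaI α (p 0) + deltaI α (p 2) + deltaIJ α (p 0) (p 1) +
          deltaIJ α (p 1) (p 0) + deltaIJ α (p 1) (p 2) + deltaIJ α (p 2) (p 0)) / 2) :=
    fun p => ciInf_le (Set.Finite.bddBelow (Set.finite_range _)) p
  have hTa : deltaTot α ≤ α 0 0 + α 1 1 + α 2 2 - α 0 1 - α 1 2 := by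
    have h := (hT 1).trans (min_le_left _ _)
    simp only [Equiv.Perm.coe_one, id_eq, hd, hdd] at h
    linarith
  have hTb : deltaTot α ≤ α 0 0 + α 1 1 + α 2 2 - α 2 0 - α 0 1 := by
    have h := (hT p201).trans (min_le_left _ _)
    have e0 : p201 0 = 2 := rfl
    have e1 : p201 1 = 0 := rfl
    have e2 : p201 2 = 1 := rfl
    rw [e0, e1, e2] at h
    simp only [hd, hdd] at h
    linarith
  have hTc : deltaTot α ≤ α 0 0 + α 1 1 + α 2 2 - α 1 0 - α 0 2 := by
    have h := (hT p102).trans (min_le_left _ _)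
    have e0 : p102 0 = 1 := rfl
    have e1 : p102 1 = 0 := rfl
    have e2 : p102 2 = 2 := rfl
    rw [e0, e1, e2] at h
    simp only [hd, hdd] at h
    linarith
  have hfin : ∀ i : Fin 3, i = 0 ∨ i = 1 ∨ i = 2 := by decide
  unfold Dhat
  rw [if_pos hcond]
  ext d
  simp only [Dregion, Set.mem_setOf_eq]
  constructor
  · rintro ⟨hb, hp, hs⟩
    have hb0 := hb 0; have hb1 := hb 1; have hb2 := hb 2
    rw [hd] at hb0 hb1 hb2
    have hp01 := hp 0 1 (by decide)
    have hp02 := hp 0 2 (by decide)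
    have hp12 := hp 1 2 (by decide)
    simp only [hd, hdd] at hp01 hp02 hp12
    have hp01l := hp01.trans (min_le_left _ _)
    have hp02l := hp02.trans (min_le_left _ _)
    have hp02r := hp02.trans (min_le_right _ _)
    have hp12l := hp12.trans (min_le_left _ _)
    have hp12r := hp12.trans (min_le_right _ _)
    refine ⟨hb0.1, hb1.1, hb2.1, hb0.2, hb1.2, hb2.2, ?_, ?_, ?_, ?_⟩
    · rw [← hmax]; linarith
    · rw [le_sub_comm]
      exact max_le (by linarith) (max_le (by linarith)
        (max_le (by linarith) (by linarith)))
    · rw [le_sub_comm]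
      exact max_le (by linarith) (by linarith)
    · rw [← hmax, le_sub_comm]
      refine max_le ?_ (max_le (by linarith) (max_le (by linarith) (by linarith)))
      rw [← max_add_add_left]
      exact max_le (by linarith) (by linarith)
  · rintro ⟨g0, g1, g2, g3, g4, g5, g6, g7, g8, g9⟩
    rw [← hmax] at g6 g9
    -- consequences of the total-sum constraint g9
    have e1 : d 0 + d 1 + d 2 ≤ α 0 0 + α 1 1 + α 2 2 - (α 0 1 + α 1 2) := by
      have m1 := le_max_left (α 0 1 + max (α 1 2) (α 2 1))
        (max (α 0 2 + α 2 0) (max (α 2 0 + α 0 1) (α 1 0 + α 0 2)))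
      have m2 := le_max_left (α 1 2) (α 2 1)
      linarith
    have e2 : d 0 + d 1 + d 2 ≤ α 0 0 + α 1 1 + α 2 2 - (α 2 0 + α 0 1) := by
      have m1 := le_trans (le_trans (le_max_left (α 2 0 + α 0 1) (α 1 0 + α 0 2))
        (le_max_right (α 0 2 + α 2 0) _))
        (le_max_right (α 0 1 + max (α 1 2) (α 2 1)) _)
      linarith
    have e3 : d 0 + d 1 + d 2 ≤ α 0 0 + α 1 1 + α 2 2 - (α 1 0 + α 0 2) := by
      have m1 := le_trans (le_trans (le_max_right (α 2 0 + α 0 1) (α 1 0 + α 0 2))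
        (le_max_right (α 0 2 + α 2 0) _))
        (le_max_right (α 0 1 + max (α 1 2) (α 2 1)) _)
      linarith
    -- consequences of the pairwise constraints g7, g8
    have f1 : d 0 + d 2 ≤ α 0 0 + α 2 2 - α 2 0 := by
      have m1 : α 2 0 ≤ max (α 1 2) (max (α 2 1) (max (α 2 0) (α 0 2))) := by
        simp [le_max_iff]
      linarith
    have f2 : d 0 + d 2 ≤ α 0 0 + α 2 2 - α 0 2 := by
      have m1 : α 0 2 ≤ max (α 1 2) (max (α 2 1) (max (α 2 0) (α 0 2))) := by
        simp [le_max_iff]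
      linarith
    have f3 : d 1 + d 2 ≤ α 1 1 + α 2 2 - α 1 2 := by
      have m1 := le_max_left (α 1 2) (α 2 1); linarith
    have f4 : d 1 + d 2 ≤ α 1 1 + α 2 2 - α 2 1 := by
      have m1 := le_max_right (α 1 2) (α 2 1); linarith
    refine ⟨?_, ?_, ?_⟩
    · intro i
      rcases hfin i with rfl | rfl | rfl <;> rw [hd] <;>
        exact ⟨by assumption, by assumption⟩
    · intro i k hik
      rcases hfin i with rfl | rfl | rfl <;> rcases hfin k with rfl | rfl | rfl <;>
        simp only [hd, hdd] <;>
        first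
          | exact absurd rfl hik
          | exact le_min (by linarith) (by linarith)
    · apply le_ciInf
      intro p
      simp only [hd, hdd]
      rcases perm_cases p with ⟨ha, hb, hc⟩ | ⟨ha, hb, hc⟩ | ⟨ha, hb, hc⟩ |
          ⟨ha, hb, hc⟩ | ⟨ha, hb, hc⟩ | ⟨ha, hb, hc⟩ <;>
        rw [ha, hb, hc] <;> exact le_min (by linarith) (by linarith)
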